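/- Let Ω ⊆ ℝⁿ (n ≥ 2) be a nonempty, open, bounded set and let G ⊆ Ω be Lebesgue-measurable with P_Ω(G) < ∞. Let ξ_k ↘ 0 and let φ_k : Ω → ℝ (k = 1, 2, …) be continuously differentiable with x ↦ |∇φ_k(x)|² and x ↦ W(φ_k(x)) Lebesgue integrable on Ω. Assume φ_k → χ_G almost everywhere in Ω and sup_{k ≥ 1} ∫_Ω [(ξ_k/2)|∇φ_k|² + W(φ_k)/ξ_k] dx < ∞. Define η_k(x) := ∫₀^{φ_k(x)} √(2 W(t)) dt. Then sup_{k ≥ 1} ‖η_k‖_{L^{4/3}(Ω)} < ∞ and sup_{k ≥ 1} ∫_Ω |∇η_k| dx < ∞; moreover η_k → χ_G almost everywhere in Ω and η_k → χ_G strongly in L^q(Ω) for every q with 1 ≤ q < 4/3. -/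

import Mathlib

open MeasureTheory Filter Topology RealInnerProductSpace

/-- The quartic double-well potential `W(s) = 18 s² (1-s)²`. -/
noncomputable def W (s : ℝ) : ℝ := 18 * s ^ 2 * (1 - s) ^ 2

/-- Divergence of a vector field on `ℝⁿ`. -/
noncomputable def vdiv {n : ℕ} (g : EuclideanSpace ℝ (Fin n) → EuclideanSpace ℝ (Fin n))
    (x : EuclideanSpace ℝ (Fin n)) : ℝ :=
  ∑ i, fderiv ℝ g x (EuclideanSpace.single i 1) i

/-- The set of numbers `∫_G div g` over admissible test vector fields `g` (C¹, compactly
supported in `Ω`, with `|g| ≤ 1`), whose supremum is the perimeter of `G` in `Ω`. -/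
noncomputable def perimSet {n : ℕ} (Ω G : Set (EuclideanSpace ℝ (Fin n))) : Set ℝ :=
  { r | ∃ g : EuclideanSpace ℝ (Fin n) → EuclideanSpace ℝ (Fin n),
      ContDiff ℝ 1 g ∧ HasCompactSupport g ∧ tsupport g ⊆ Ω ∧
      (∀ x, ‖g x‖ ≤ 1) ∧ r = ∫ x in G, vdiv g x }

/-- The perimeter `P_Ω(G)` of `G` in `Ω`. -/
noncomputable def perim {n : ℕ} (Ω G : Set (EuclideanSpace ℝ (Fin n))) : ℝ :=
  sSup (perimSet Ω G)

/-- `η_k(x) = ∫₀^{φ_k(x)} √(2W(t)) dt`. -/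
noncomputable def etaFn {n : ℕ} (φ : ℕ → EuclideanSpace ℝ (Fin n) → ℝ) (k : ℕ)
    (x : EuclideanSpace ℝ (Fin n)) : ℝ :=
  ∫ t in (0 : ℝ)..(φ k x), Real.sqrt (2 * W t)

/-!
The primitive `F(s) = ∫₀ˢ √(2W)` is continuous with `F(0) = 0` and `F(1) = 1`, so
`η_k = F ∘ φ_k → χ_G` wherever `φ_k → χ_G`. The energy bound gives `∫ W(φ_k) ≤ ξ_k C ≤ ξ_0 C`;
since `F` grows like `|s|³` and `W` like `s⁴`, `|F|^{4/3} ≤ 300 + 6W`, which bounds `η_k` in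
`L^{4/3}`, and AM–GM `√(2W)|∇φ| ≤ (ξ/2)|∇φ|² + W/ξ` bounds the total variation of `η_k`.
On a set of finite measure, Hölder on small sets turns the `L^{4/3}` bound into uniform
integrability in `L^q` for `q < 4/3`, and Vitali's theorem upgrades a.e. convergence to
`L^q` convergence.
-/

open scoped ENNReal

lemma W_nonneg (s : ℝ) : 0 ≤ W s := by unfold W; positivity

lemma sqrt_two_mul_W (t : ℝ) : Real.sqrt (2 * W t) = |6 * (t - t ^ 2)| := by
  rw [show 2 * W t = (6 * (t - t ^ 2)) ^ 2 by unfold W; ring, Real.sqrt_sq_eq_abs]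

lemma continuous_sqrt_two_mul_W : Continuous fun t => Real.sqrt (2 * W t) := by
  simp_rw [sqrt_two_mul_W]
  fun_prop

lemma sqrt_two_mul_W_mul_le {ξ : ℝ} (hξ : 0 < ξ) (s v : ℝ) :
    Real.sqrt (2 * W s) * v ≤ ξ / 2 * v ^ 2 + W s / ξ := by
  have key : ξ / 2 * v ^ 2 + W s / ξ - Real.sqrt (2 * W s) * v
      = (ξ * v - Real.sqrt (2 * W s)) ^ 2 / (2 * ξ) := by
    have := Real.sq_sqrt (by linarith [W_nonneg s] : 0 ≤ 2 * W s)
    field_simp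
    linear_combination (-1 : ℝ) * this
  have : 0 ≤ (ξ * v - Real.sqrt (2 * W s)) ^ 2 / (2 * ξ) := by positivity
  linarith

-- `etaFn φ k x` is `primitiveW (φ k x)` by definition.
noncomputable def primitiveW (s : ℝ) : ℝ := ∫ t in (0 : ℝ)..s, Real.sqrt (2 * W t)

lemma continuous_primitiveW : Continuous primitiveW :=
  intervalIntegral.continuous_primitive continuous_sqrt_two_mul_W.intervalIntegrable 0

lemma primitiveW_one : primitiveW 1 = 1 := by
  have h : ∀ t ∈ Set.uIcc (0 : ℝ) 1, Real.sqrt (2 * W t) = 6 * t - 6 * t ^ 2 := by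
    intro t ht
    rw [Set.uIcc_of_le zero_le_one] at ht
    rw [sqrt_two_mul_W, abs_of_nonneg (by nlinarith [ht.1, ht.2])]
    ring
  rw [primitiveW, intervalIntegral.integral_congr h, intervalIntegral.integral_sub
    (Continuous.intervalIntegrable (by fun_prop) _ _)
    (Continuous.intervalIntegrable (by fun_prop) _ _), intervalIntegral.integral_const_mul,
    intervalIntegral.integral_const_mul, integral_id, integral_pow]
  norm_num

lemma primitiveW_indicator_one {α : Type*} (G : Set α) (x : α) :
    primitiveW (G.indicator (fun _ => 1) x) = G.indicator (fun _ => 1) x := by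
  by_cases hx : x ∈ G
  · simp [hx, primitiveW_one]
  · simp [hx, primitiveW]

lemma abs_primitiveW_le (s : ℝ) : |primitiveW s| ≤ 6 * s ^ 2 + 6 * |s| ^ 3 := by
  have hbound : ∀ t ∈ Set.uIoc (0 : ℝ) s, ‖Real.sqrt (2 * W t)‖ ≤ 6 * |s| + 6 * |s| ^ 2 := by
    intro t ht
    have hts : |t| ≤ |s| := by
      simpa using Set.abs_sub_left_of_mem_uIcc (Set.uIoc_subset_uIcc ht)
    rw [Real.norm_eq_abs, abs_of_nonneg (Real.sqrt_nonneg _), sqrt_two_mul_W]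
    calc |6 * (t - t ^ 2)| ≤ 6 * |t| + 6 * |t| ^ 2 := by
          rw [mul_sub, ← abs_pow]
          refine (abs_sub _ _).trans (le_of_eq ?_)
          rw [abs_mul, abs_mul, abs_of_pos (by norm_num : (0 : ℝ) < 6)]
      _ ≤ 6 * |s| + 6 * |s| ^ 2 := by gcongr
  have := intervalIntegral.norm_integral_le_of_norm_le_const hbound
  rw [Real.norm_eq_abs, sub_zero] at this
  rw [primitiveW]
  nlinarith [abs_nonneg s, sq_abs s]

lemma rpow_div_le_of_pow_le {x y : ℝ} (hx : 0 ≤ x) (hy : 0 ≤ y) {m n : ℕ} (hn : n ≠ 0)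
    (h : x ^ m ≤ y ^ n) : x ^ ((m : ℝ) / n) ≤ y :=
  calc x ^ ((m : ℝ) / n) = (x ^ m) ^ ((n : ℝ)⁻¹) := by
        rw [div_eq_mul_inv, Real.rpow_mul hx, Real.rpow_natCast]
    _ ≤ (y ^ n) ^ ((n : ℝ)⁻¹) := by gcongr
    _ = y := Real.pow_rpow_inv_natCast hy hn

lemma cubic_pow_four_le {t : ℝ} (ht : 0 ≤ t) :
    (6 * t ^ 2 + 6 * t ^ 3) ^ 4 ≤ (300 + 108 * t ^ 2 * (1 - t) ^ 2) ^ 3 := by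
  have hrhs : 0 ≤ 108 * t ^ 2 * (1 - t) ^ 2 := by positivity
  rcases le_or_gt t 2 with h | h
  · have hlhs : 6 * t ^ 2 + 6 * t ^ 3 ≤ 72 := by
      have : t ^ 2 ≤ 4 := by nlinarith
      have : t ^ 3 ≤ 8 := by nlinarith
      linarith
    calc (6 * t ^ 2 + 6 * t ^ 3) ^ 4 ≤ 72 ^ 4 := by gcongr
      _ ≤ 300 ^ 3 := by norm_num
      _ ≤ _ := by gcongr; linarith
  · calc (6 * t ^ 2 + 6 * t ^ 3) ^ 4 ≤ (9 * t ^ 3) ^ 4 := by gcongr; nlinarith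
      _ ≤ (27 * t ^ 4) ^ 3 := by ring_nf; gcongr; norm_num
      _ ≤ _ := by
          gcongr
          nlinarith [mul_pos (by positivity : 0 < t ^ 2) (by linarith : 0 < t - 2)]

lemma abs_primitiveW_rpow_le (s : ℝ) : |primitiveW s| ^ ((4 : ℝ) / 3) ≤ 300 + 6 * W s := by
  have hW : 108 * |s| ^ 2 * (1 - |s|) ^ 2 ≤ 6 * W s := by
    unfold W
    rcases le_or_gt 0 s with h | h
    · rw [abs_of_nonneg h]; linarith
    · rw [abs_of_neg h]; nlinarith [sq_nonneg s]
  have h4 : |primitiveW s| ^ 4 ≤ (300 + 6 * W s) ^ 3 :=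
    calc |primitiveW s| ^ 4 ≤ (6 * |s| ^ 2 + 6 * |s| ^ 3) ^ 4 := by
          gcongr; simpa only [sq_abs] using abs_primitiveW_le s
      _ ≤ (300 + 108 * |s| ^ 2 * (1 - |s|) ^ 2) ^ 3 := cubic_pow_four_le (abs_nonneg s)
      _ ≤ (300 + 6 * W s) ^ 3 := by gcongr
  simpa using rpow_div_le_of_pow_le (abs_nonneg _) (by linarith [W_nonneg s]) three_ne_zero h4

section Integration

variable {α E : Type*} [MeasurableSpace α] {μ : Measure α} [NormedAddCommGroup E]

lemma lintegral_ofReal_le_ofReal_integral {f g : α → ℝ} (hg : Integrable g μ)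
    (hg0 : ∀ᵐ x ∂μ, 0 ≤ g x) (hfg : ∀ᵐ x ∂μ, f x ≤ g x) :
    ∫⁻ x, ENNReal.ofReal (f x) ∂μ ≤ ENNReal.ofReal (∫ x, g x ∂μ) := by
  rw [ofReal_integral_eq_lintegral_ofReal hg hg0]
  exact lintegral_mono_ae (hfg.mono fun x hx => ENNReal.ofReal_le_ofReal hx)

lemma eLpNorm_le_of_norm_rpow_le {f : α → E} {g : α → ℝ} {p C : ℝ} (hp : 0 < p)
    (hg : Integrable g μ) (hfg : ∀ᵐ x ∂μ, ‖f x‖ ^ p ≤ g x) (hC : ∫ x, g x ∂μ ≤ C) :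
    eLpNorm f (ENNReal.ofReal p) μ ≤ ENNReal.ofReal C ^ (1 / p) := by
  rw [eLpNorm_eq_lintegral_rpow_enorm_toReal (by simpa using hp) ENNReal.ofReal_ne_top,
    ENNReal.toReal_ofReal hp.le]
  gcongr
  calc ∫⁻ x, ‖f x‖ₑ ^ p ∂μ = ∫⁻ x, ENNReal.ofReal (‖f x‖ ^ p) ∂μ := by
        simp_rw [← ofReal_norm, ENNReal.ofReal_rpow_of_nonneg (norm_nonneg _) hp.le]
    _ ≤ ENNReal.ofReal (∫ x, g x ∂μ) :=
        lintegral_ofReal_le_ofReal_integral hg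
          (hfg.mono fun x hx => (by positivity : 0 ≤ ‖f x‖ ^ p).trans hx) hfg
    _ ≤ ENNReal.ofReal C := ENNReal.ofReal_le_ofReal hC

lemma integral_le_mul_of_integral_add_div_le {f g : α → ℝ} {ξ C : ℝ} (hξ : 0 < ξ)
    (hf : Integrable f μ) (hg : Integrable g μ) (hf0 : ∀ᵐ x ∂μ, 0 ≤ f x)
    (h : ∫ x, (f x + g x / ξ) ∂μ ≤ C) : ∫ x, g x ∂μ ≤ ξ * C := by
  rw [integral_add hf (hg.div_const ξ), integral_div] at h
  have := integral_nonneg_of_ae hf0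
  rw [← div_le_iff₀' hξ]
  linarith

lemma integral_norm_rpow_eq_toReal_eLpNorm_rpow {f : α → E} {p : ℝ} (hp : 0 < p)
    (hf : AEStronglyMeasurable f μ) :
    ∫ x, ‖f x‖ ^ p ∂μ = (eLpNorm f (ENNReal.ofReal p) μ).toReal ^ p := by
  rw [integral_eq_lintegral_of_nonneg_ae (ae_of_all _ fun x => by positivity)
      (hf.norm.aemeasurable.pow_const p).aestronglyMeasurable,
    eLpNorm_eq_eLpNorm' (by simpa using hp) ENNReal.ofReal_ne_top, ENNReal.toReal_ofReal hp.le,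
    ENNReal.toReal_rpow, ← lintegral_rpow_enorm_eq_rpow_eLpNorm' hp]
  simp_rw [← ofReal_norm, ENNReal.ofReal_rpow_of_nonneg (norm_nonneg _) hp.le]

lemma unifIntegrable_of_eLpNorm_le {ι : Type*} {f : ι → α → E} {p q C : ℝ≥0∞} (hq : q ≠ 0)
    (hqp : q < p) (hf : ∀ i, AEStronglyMeasurable (f i) μ) (hfC : ∀ i, eLpNorm (f i) p μ ≤ C)
    (hC : C ≠ ∞) : UnifIntegrable f q μ := by
  set r := 1 / q.toReal - 1 / p.toReal
  have hr : 0 < r := by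
    have hq' : 0 < q.toReal := ENNReal.toReal_pos hq hqp.ne_top
    rcases eq_or_ne p ∞ with rfl | hp
    · simpa [r] using hq'
    · have := (ENNReal.toReal_lt_toReal hqp.ne_top hp).2 hqp
      simp only [r, sub_pos]
      gcongr
  have hlim : Tendsto (fun δ : ℝ => C * ENNReal.ofReal δ ^ r) (𝓝[>] 0) (𝓝 0) := by
    have hcont : Continuous fun δ : ℝ => ENNReal.ofReal δ ^ r :=
      ENNReal.continuous_rpow_const.comp ENNReal.continuous_ofReal
    simpa [hr] using (ENNReal.Tendsto.const_mul (hcont.tendsto 0) (Or.inr hC)).mono_left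
      nhdsWithin_le_nhds
  intro ε hε
  obtain ⟨δ, hδ, hδpos⟩ :=
    ((hlim.eventually (gt_mem_nhds (ENNReal.ofReal_pos.2 hε))).and self_mem_nhdsWithin).exists
  refine ⟨δ, hδpos, fun i s hs hμs => ?_⟩
  calc eLpNorm (s.indicator (f i)) q μ = eLpNorm (f i) q (μ.restrict s) :=
        eLpNorm_indicator_eq_eLpNorm_restrict hs
    _ ≤ eLpNorm (f i) p (μ.restrict s) * μ.restrict s Set.univ ^ r :=
        eLpNorm_le_eLpNorm_mul_rpow_measure_univ hqp.le (hf i).restrict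
    _ ≤ C * ENNReal.ofReal δ ^ r := by
        rw [Measure.restrict_apply_univ]
        gcongr
        exact (eLpNorm_restrict_le _ _ _ _).trans (hfC i)
    _ ≤ ENNReal.ofReal ε := hδ.le

lemma tendsto_integral_norm_sub_rpow_of_tendsto_ae [IsFiniteMeasure μ] {f : ℕ → α → E}
    {g : α → E} {p q : ℝ} {C : ℝ≥0∞} (hq : 1 ≤ q) (hqp : q < p)
    (hf : ∀ n, AEStronglyMeasurable (f n) μ)
    (hfC : ∀ n, eLpNorm (f n) (ENNReal.ofReal p) μ ≤ C) (hC : C ≠ ∞)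
    (hg : MemLp g (ENNReal.ofReal q) μ)
    (hfg : ∀ᵐ x ∂μ, Tendsto (fun n => f n x) atTop (𝓝 (g x))) :
    Tendsto (fun n => ∫ x, ‖f n x - g x‖ ^ q ∂μ) atTop (𝓝 0) := by
  have hq0 : 0 < q := zero_lt_one.trans_le hq
  have hui : UnifIntegrable f (ENNReal.ofReal q) μ :=
    unifIntegrable_of_eLpNorm_le (by simpa using hq0)
      ((ENNReal.ofReal_lt_ofReal_iff (hq0.trans hqp)).2 hqp) hf hfC hC
  have hLq := tendsto_Lp_finite_of_tendsto_ae (ENNReal.one_le_ofReal.2 hq) ENNReal.ofReal_ne_top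
    hf hg hui hfg
  have := ((ENNReal.tendsto_toReal ENNReal.zero_ne_top).comp hLq).rpow_const (Or.inr hq0.le)
  rw [ENNReal.toReal_zero, Real.zero_rpow hq0.ne'] at this
  exact this.congr fun n =>
    (integral_norm_rpow_eq_toReal_eLpNorm_rpow hq0 ((hf n).sub hg.1)).symm

lemma eLpNorm_primitiveW_comp_le [IsFiniteMeasure μ] {f : α → ℝ} {B : ℝ}
    (hW : Integrable (fun x => W (f x)) μ) (hB : ∫ x, W (f x) ∂μ ≤ B) :
    eLpNorm (fun x => primitiveW (f x)) (ENNReal.ofReal (4 / 3)) μ ≤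
      ENNReal.ofReal (300 * μ.real Set.univ + 6 * B) ^ (1 / (4 / 3 : ℝ)) := by
  have hint : Integrable (fun x => 300 + 6 * W (f x)) μ := (integrable_const _).add (hW.const_mul 6)
  refine eLpNorm_le_of_norm_rpow_le (by norm_num) hint
    (ae_of_all _ fun x => abs_primitiveW_rpow_le (f x)) ?_
  rw [integral_add (integrable_const _) (hW.const_mul 6), integral_const_mul, integral_const,
    smul_eq_mul, mul_comm]
  gcongr

lemma lintegral_sqrt_two_mul_W_mul_le {f v : α → ℝ} {ξ : ℝ} (hξ : 0 < ξ)
    (hv : Integrable (fun x => v x ^ 2) μ) (hW : Integrable (fun x => W (f x)) μ) :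
    ∫⁻ x, ENNReal.ofReal (Real.sqrt (2 * W (f x)) * v x) ∂μ ≤
      ENNReal.ofReal (∫ x, (ξ / 2 * v x ^ 2 + W (f x) / ξ) ∂μ) :=
  lintegral_ofReal_le_ofReal_integral ((hv.const_mul _).add (hW.div_const _))
    (ae_of_all _ fun x => by have := W_nonneg (f x); positivity)
    (ae_of_all _ fun x => sqrt_two_mul_W_mul_le hξ _ _)

end Integration

theorem etaFn_bounds_and_convergence_general {n : ℕ}
    (Ω : Set (EuclideanSpace ℝ (Fin n))) (hΩopen : IsOpen Ω)
    (hΩbdd : Bornology.IsBounded Ω)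
    (G : Set (EuclideanSpace ℝ (Fin n))) (hGmeas : MeasurableSet G)
    (ξ : ℕ → ℝ) (hξpos : ∀ k, 0 < ξ k) (hξanti : StrictAnti ξ)
    (φ : ℕ → EuclideanSpace ℝ (Fin n) → ℝ)
    (hφ : ∀ k, ContDiffOn ℝ 1 (φ k) Ω)
    (hgradInt : ∀ k, IntegrableOn (fun x => ‖gradient (φ k) x‖ ^ 2) Ω)
    (hWInt : ∀ k, IntegrableOn (fun x => W (φ k x)) Ω)
    (hae : ∀ᵐ x ∂(volume.restrict Ω),
      Tendsto (fun k => φ k x) atTop (𝓝 (G.indicator (fun _ => (1 : ℝ)) x)))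
    (hsup : ∃ C : ℝ, ∀ k,
      (∫ x in Ω, (ξ k / 2 * ‖gradient (φ k) x‖ ^ 2 + W (φ k x) / ξ k)) ≤ C) :
    (⨆ k, eLpNorm (etaFn φ k) (ENNReal.ofReal (4 / 3)) (volume.restrict Ω)) < ⊤ ∧
    (⨆ k, ∫⁻ x in Ω,
        ENNReal.ofReal (Real.sqrt (2 * W (φ k x)) * ‖gradient (φ k) x‖)) < ⊤ ∧
    (∀ᵐ x ∂(volume.restrict Ω),
      Tendsto (fun k => etaFn φ k x) atTop (𝓝 (G.indicator (fun _ => (1 : ℝ)) x))) ∧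
    (∀ q : ℝ, 1 ≤ q → q < 4 / 3 →
      Tendsto (fun k => ∫ x in Ω, |etaFn φ k x - G.indicator (fun _ => (1 : ℝ)) x| ^ q)
        atTop (𝓝 0)) := by
  obtain ⟨C, hC⟩ := hsup
  have : IsFiniteMeasure (volume.restrict Ω) :=
    isFiniteMeasure_restrict.2 hΩbdd.measure_lt_top.ne
  have hWle : ∀ k, ∫ x in Ω, W (φ k x) ≤ ξ k * C := fun k =>
    integral_le_mul_of_integral_add_div_le (hξpos k) ((hgradInt k).const_mul _) (hWInt k)
      (ae_of_all _ fun x => by have := hξpos k; positivity) (hC k)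
  have hC0 : 0 ≤ C := nonneg_of_mul_nonneg_right
    ((integral_nonneg fun x => W_nonneg (φ 0 x)).trans (hWle 0)) (hξpos 0)
  have hη_bound : ∀ k, eLpNorm (etaFn φ k) (ENNReal.ofReal (4 / 3)) (volume.restrict Ω) ≤
      ENNReal.ofReal (300 * (volume.restrict Ω).real Set.univ + 6 * (ξ 0 * C)) ^
        (1 / (4 / 3 : ℝ)) := fun k =>
    eLpNorm_primitiveW_comp_le (hWInt k)
      ((hWle k).trans (mul_le_mul_of_nonneg_right (hξanti.antitone k.zero_le) hC0))
  have hη_meas : ∀ k, AEStronglyMeasurable (etaFn φ k) (volume.restrict Ω) := fun k =>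
    continuous_primitiveW.comp_aestronglyMeasurable
      ((hφ k).continuousOn.aestronglyMeasurable hΩopen.measurableSet)
  have hη_ae : ∀ᵐ x ∂(volume.restrict Ω),
      Tendsto (fun k => etaFn φ k x) atTop (𝓝 (G.indicator (fun _ => (1 : ℝ)) x)) := by
    filter_upwards [hae] with x hx
    have h := (continuous_primitiveW.tendsto _).comp hx
    rwa [primitiveW_indicator_one] at h
  have hgradη_bound : ∀ k, ∫⁻ x in Ω,
      ENNReal.ofReal (Real.sqrt (2 * W (φ k x)) * ‖gradient (φ k) x‖) ≤ ENNReal.ofReal C :=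
    fun k => (lintegral_sqrt_two_mul_W_mul_le (hξpos k) (hgradInt k) (hWInt k)).trans
      (ENNReal.ofReal_le_ofReal (hC k))
  refine ⟨(iSup_le hη_bound).trans_lt (ENNReal.rpow_lt_top_of_nonneg (by norm_num)
    ENNReal.ofReal_ne_top), (iSup_le hgradη_bound).trans_lt ENNReal.ofReal_lt_top, hη_ae,
    fun q hq hq43 => ?_⟩
  simpa only [Real.norm_eq_abs] using tendsto_integral_norm_sub_rpow_of_tendsto_ae hq hq43
    hη_meas hη_bound (ENNReal.rpow_ne_top_of_nonneg (by norm_num) ENNReal.ofReal_ne_top)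
    ((memLp_const 1).indicator hGmeas) hη_ae

theorem etaFn_bounds_and_convergence {n : ℕ} (hn : 2 ≤ n)
    (Ω : Set (EuclideanSpace ℝ (Fin n))) (hΩne : Ω.Nonempty) (hΩopen : IsOpen Ω)
    (hΩbdd : Bornology.IsBounded Ω)
    (G : Set (EuclideanSpace ℝ (Fin n))) (hGmeas : MeasurableSet G) (hGΩ : G ⊆ Ω)
    (hPfin : BddAbove (perimSet Ω G))
    (ξ : ℕ → ℝ) (hξpos : ∀ k, 0 < ξ k) (hξanti : StrictAnti ξ)
    (hξ0 : Tendsto ξ atTop (𝓝 0))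
    (φ : ℕ → EuclideanSpace ℝ (Fin n) → ℝ)
    (hφ : ∀ k, ContDiffOn ℝ 1 (φ k) Ω)
    (hgradInt : ∀ k, IntegrableOn (fun x => ‖gradient (φ k) x‖ ^ 2) Ω)
    (hWInt : ∀ k, IntegrableOn (fun x => W (φ k x)) Ω)
    (hae : ∀ᵐ x ∂(volume.restrict Ω),
      Tendsto (fun k => φ k x) atTop (𝓝 (G.indicator (fun _ => (1 : ℝ)) x)))
    (hsup : ∃ C : ℝ, ∀ k,
      (∫ x in Ω, (ξ k / 2 * ‖gradient (φ k) x‖ ^ 2 + W (φ k x) / ξ k)) ≤ C) :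
    (⨆ k, eLpNorm (etaFn φ k) (ENNReal.ofReal (4 / 3)) (volume.restrict Ω)) < ⊤ ∧
    (⨆ k, ∫⁻ x in Ω,
        ENNReal.ofReal (Real.sqrt (2 * W (φ k x)) * ‖gradient (φ k) x‖)) < ⊤ ∧
    (∀ᵐ x ∂(volume.restrict Ω),
      Tendsto (fun k => etaFn φ k x) atTop (𝓝 (G.indicator (fun _ => (1 : ℝ)) x))) ∧
    (∀ q : ℝ, 1 ≤ q → q < 4 / 3 →
      Tendsto (fun k => ∫ x in Ω, |etaFn φ k x - G.indicator (fun _ => (1 : ℝ)) x| ^ q)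
        atTop (𝓝 0)) :=
  etaFn_bounds_and_convergence_general Ω hΩopen hΩbdd G hGmeas ξ hξpos hξanti φ hφ hgradInt hWInt
    hae hsup
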